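/- arXiv:2305.05820 — 2 statements merged into one kernel-verified Lean document; each statement's English description precedes it below -/
import Mathlib

section
/- Fix integers n, m, k with 1 ≤ k < n and m ≥ 2. The probability that there exist indices i < j and a position a with x_i(a) = x_j(a) is at least [ (m choose 2)·(n − k + 1)·2^{−k} ]² / ( m⁴·n²·2^{−2k} + 2·m²·n·k·2^{−k} ). -/
/-- The symbol of `x` at (0-indexed) position `t`, with junk value `false` out of range. -/
def get {n : ℕ} (x : Fin n → Bool) (t : ℕ) : Bool :=
  if h : t < n then x ⟨t, h⟩ else false

/-- The `k`-mer of `x` starting at (0-indexed) position `a`. -/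
def kmer {n : ℕ} (k : ℕ) (x : Fin n → Bool) (a : ℕ) : Fin k → Bool :=
  fun t => get x (a + t.val)

/-- Probability of an event under the uniform distribution on a finite sample space. -/
noncomputable def prob {Ω : Type*} [Fintype Ω] (p : Ω → Prop) : ℝ :=
  (Nat.card {ω // p ω} : ℝ) / (Fintype.card Ω : ℝ)

/-!
Let `V` count the aligned comparisons `((i, j), a)`, `i < j`, at which rows `i` and `j` of the
uniformly random array share their `k`-mer, so that the event is `V ≠ 0`. Each comparison succeeds
with probability `2⁻ᵏ`. Two comparisons that do not concern the same pair of rows at overlapping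
windows are independent: the second one says that a window of one of its rows is a copy of the
other row, and that window can be chosen outside everything the first one reads, so imposing it
divides the probability by `2ᵏ` once more. Each comparison has at most `2k` overlapping partners,
bounded crudely by `2⁻ᵏ`. This bounds `E[V²]`, and the second moment method
`E[V]² ≤ P(V ≠ 0) · E[V²]` concludes.
-/

open Finset Function

section Prob
variable {Ω : Type*} [Fintype Ω] {p q : Ω → Prop}

lemma prob_nonneg : 0 ≤ prob p := by unfold prob; positivity

lemma prob_mono (h : ∀ ω, p ω → q ω) : prob p ≤ prob q := by
  unfold prob
  gcongr
  exact Nat.card_mono (Set.toFinite _) fun ω => h ω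

lemma prob_true [Nonempty Ω] : prob (fun _ : Ω => True) = 1 := by
  unfold prob
  rw [Nat.card_congr (Equiv.subtypeUnivEquiv fun _ => trivial), Nat.card_eq_fintype_card]
  exact div_self (Nat.cast_ne_zero.mpr Fintype.card_ne_zero)

lemma prob_congr {Ω' : Type*} [Fintype Ω'] {r : Ω' → Prop} (e : Ω ≃ Ω')
    (h : ∀ ω, p ω ↔ r (e ω)) : prob p = prob r := by
  unfold prob
  rw [Nat.card_congr (e.subtypeEquiv h), Fintype.card_congr e]

lemma prob_eq_sum_ite [DecidablePred p] :
    prob p = (∑ ω, if p ω then 1 else 0) / Fintype.card Ω := by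
  rw [prob, Nat.card_eq_fintype_card, Fintype.card_subtype, natCast_card_filter]

/-- The second moment method, by Cauchy–Schwarz on the support of `V`. -/
theorem sq_mean_div_le_prob_ne_zero (V : Ω → ℝ) {D : ℝ}
    (hD : (∑ ω, V ω ^ 2) / Fintype.card Ω ≤ D) :
    ((∑ ω, V ω) / Fintype.card Ω) ^ 2 / D ≤ prob (fun ω => V ω ≠ 0) := by
  classical
  rcases le_or_gt D 0 with hD0 | hD0
  · exact (div_nonpos_of_nonneg_of_nonpos (sq_nonneg _) hD0).trans prob_nonneg
  set S := ({ω | V ω ≠ 0} : Finset Ω)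
  have hcs : (∑ ω, V ω) ^ 2 ≤ #S * ∑ ω, V ω ^ 2 := calc
    (∑ ω, V ω) ^ 2 = (∑ ω ∈ S, V ω) ^ 2 := by rw [sum_filter_ne_zero]
    _ ≤ #S * ∑ ω ∈ S, V ω ^ 2 := sq_sum_le_card_mul_sum_sq
    _ ≤ #S * ∑ ω, V ω ^ 2 :=
      mul_le_mul_of_nonneg_left (sum_le_univ_sum_of_nonneg fun _ => sq_nonneg _) (by positivity)
  have hprob : prob (fun ω => V ω ≠ 0) = #S / Fintype.card Ω := by
    rw [prob, Nat.card_eq_fintype_card, Fintype.card_subtype]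
  rw [hprob, div_le_iff₀ hD0]
  calc ((∑ ω, V ω) / Fintype.card Ω) ^ 2
      ≤ #S / Fintype.card Ω * ((∑ ω, V ω ^ 2) / Fintype.card Ω) := by
        rw [div_pow, div_mul_div_comm, ← sq]
        gcongr
    _ ≤ #S / Fintype.card Ω * D := by gcongr
end Prob

section Pinning
variable {α β : Type*} [Fintype α] [DecidableEq α] [Fintype β]

theorem prob_and_pinned [Nonempty β] (D : Finset α) {P : (α → β) → Prop}
    {h : (α → β) → α → β} (hP : DependsOn P (↑D)ᶜ) (hh : DependsOn h (↑D)ᶜ) :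
    prob (fun f => P f ∧ ∀ c ∈ D, f c = h f c) = prob P / Fintype.card β ^ #D := by
  let pin (f : α → β) : α → β := D.piecewise (h f) f
  have pin_eq (f : α → β) : ∀ c ∈ (↑D : Set α)ᶜ, pin f c = f c := fun c hc =>
    D.piecewise_eq_of_notMem _ _ hc
  let fill (g : α → β) (v : D → β) : α → β := fun c => if hc : c ∈ D then v ⟨c, hc⟩ else g c
  have fill_eq (g : α → β) (v : D → β) : ∀ c ∈ (↑D : Set α)ᶜ, fill g v c = g c := fun c hc =>
    dif_neg hc
  let e : {f // P f} ≃ {f // P f ∧ ∀ c ∈ D, f c = h f c} × (D → β) :=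
    { toFun f :=
        (⟨pin f, (hP (pin_eq f)).symm ▸ f.2, fun c hc => by simp [pin, hc, hh (pin_eq f)]⟩,
          fun c => f.1 c)
      invFun g := ⟨fill g.1 g.2, (hP (fill_eq g.1 g.2)).symm ▸ g.1.2.1⟩
      left_inv f := by
        ext c
        by_cases hc : c ∈ D <;> simp [pin, fill, hc]
      right_inv g := by
        obtain ⟨⟨g, hgP, hgD⟩, v⟩ := g
        ext c
        · by_cases hc : c ∈ D
          · simp only [pin, piecewise_eq_of_mem _ _ _ hc, hgD c hc]
            exact congrFun (hh (fill_eq g v)) c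
          · simp [pin, fill, hc]
        · simp [fill] }
  have hcard := Nat.card_congr e
  rw [Nat.card_prod, Nat.card_fun, Nat.card_eq_fintype_card (α := β),
    Nat.card_eq_fintype_card (α := D), Fintype.card_coe] at hcard
  unfold prob
  rw [hcard]
  push_cast
  rw [mul_div_right_comm, mul_div_cancel_right₀ _ (by positivity)]
end Pinning

section Grid
variable {m n : ℕ} {β : Type*} {k a b : ℕ} {i j r s : Fin m}

def RowsAgree (k : ℕ) (i j : Fin m) (a : ℕ) (f : Fin m × Fin n → β) : Prop :=
  ∀ c : Fin n, a ≤ c.val → c.val < a + k → f (i, c) = f (j, c)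

instance [DecidableEq β] {f : Fin m × Fin n → β} : Decidable (RowsAgree k i j a f) :=
  inferInstanceAs (Decidable (∀ _ : Fin n, _))

def window (s : Fin m) (a k : ℕ) : Finset (Fin m × Fin n) :=
  ({s} : Finset (Fin m)) ×ˢ univ.filter fun c : Fin n => a ≤ c.val ∧ c.val < a + k

lemma mem_window {c : Fin m × Fin n} :
    c ∈ window s a k ↔ c.1 = s ∧ a ≤ c.2.val ∧ c.2.val < a + k := by
  simp only [window, mem_product, mem_singleton, mem_filter, mem_univ, true_and]

lemma card_window (s : Fin m) (ha : a + k ≤ n) :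
    #(window s a k : Finset (Fin m × Fin n)) = k := by
  rw [window, card_product, card_singleton, one_mul, ← card_map Fin.valEmbedding]
  convert Nat.card_Ico a (a + k) using 2
  · ext x
    simp only [mem_map, mem_filter, mem_univ, true_and, Fin.valEmbedding_apply, mem_Ico]
    exact ⟨fun ⟨c, hc, hcx⟩ => hcx ▸ hc, fun hx => ⟨⟨x, by omega⟩, hx, rfl⟩⟩
  · omega

lemma disjoint_window (h : s ≠ r ∨ a + k ≤ b ∨ b + k ≤ a) :
    Disjoint (window s a k : Finset (Fin m × Fin n)) (window r b k) := by
  rw [disjoint_left]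
  intro c hs hr
  rw [mem_window] at hs hr
  omega

lemma rowsAgree_comm {f : Fin m × Fin n → β} : RowsAgree k i j a f ↔ RowsAgree k j i a f :=
  forall_congr' fun _ => imp_congr_right fun _ => imp_congr_right fun _ => eq_comm

lemma rowsAgree_iff_pinned {f : Fin m × Fin n → β} :
    RowsAgree k r s a f ↔ ∀ c ∈ window s a k, f c = f (r, c.2) := by
  simp only [RowsAgree, mem_window, and_imp, Prod.forall]
  exact ⟨fun h _ c hs h1 h2 => hs ▸ (h c h1 h2).symm, fun h c h1 h2 => (h s c rfl h1 h2).symm⟩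

lemma dependsOn_rowsAgree :
    DependsOn (RowsAgree (n := n) (β := β) k i j a)
      ↑(window (n := n) i a k ∪ window j a k) := by
  intro f g hfg
  have hi (c : Fin n) (h1 : a ≤ c.val) (h2 : c.val < a + k) : f (i, c) = g (i, c) :=
    hfg _ (by simp [mem_window, h1, h2])
  have hj (c : Fin n) (h1 : a ≤ c.val) (h2 : c.val < a + k) : f (j, c) = g (j, c) :=
    hfg _ (by simp [mem_window, h1, h2])
  simp only [RowsAgree, eq_iff_iff]
  exact forall_congr' fun c => imp_congr_right fun h1 => imp_congr_right fun h2 => by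
    rw [hi c h1 h2, hj c h1 h2]

variable [Fintype β] [Nonempty β]

theorem prob_and_rowsAgree {P : (Fin m × Fin n → β) → Prop}
    (hP : DependsOn P (↑(window (n := n) s a k))ᶜ) (hrs : r ≠ s) (ha : a + k ≤ n) :
    prob (fun f => P f ∧ RowsAgree k r s a f) = prob P / Fintype.card β ^ k := by
  simp only [rowsAgree_iff_pinned]
  rw [prob_and_pinned _ hP, card_window s ha]
  intro f g hfg
  funext c
  exact hfg _ (by simp [mem_window, hrs])

theorem prob_rowsAgree (hij : i ≠ j) (ha : a + k ≤ n) :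
    prob (RowsAgree (n := n) (β := β) k i j a) = 1 / Fintype.card β ^ k := by
  rw [← prob_true (Ω := Fin m × Fin n → β), ← prob_and_rowsAgree (fun _ _ _ => rfl) hij ha]
  simp only [true_and]

theorem prob_rowsAgree_and_rowsAgree {i' j' : Fin m} (hij : i < j) (hij' : i' < j')
    (ha : a + k ≤ n) (hb : b + k ≤ n) (hfar : (i, j) ≠ (i', j') ∨ a + k ≤ b ∨ b + k ≤ a) :
    prob (fun f : Fin m × Fin n → β => RowsAgree k i j a f ∧ RowsAgree k i' j' b f) =
      1 / Fintype.card β ^ (2 * k) := by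
  obtain ⟨r, s, hrs, hagree, hoff⟩ : ∃ r s, r ≠ s ∧
      (∀ f : Fin m × Fin n → β, RowsAgree k i' j' b f ↔ RowsAgree k r s b f) ∧
      ((i ≠ s ∧ j ≠ s) ∨ a + k ≤ b ∨ b + k ≤ a) := by
    rcases hfar with hne | hfar
    · by_cases hj' : i ≠ j' ∧ j ≠ j'
      · exact ⟨i', j', hij'.ne, fun _ => Iff.rfl, Or.inl hj'⟩
      by_cases hi' : i ≠ i' ∧ j ≠ i'
      · exact ⟨j', i', hij'.ne', fun _ => rowsAgree_comm, Or.inl hi'⟩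
      simp only [ne_eq, Prod.ext_iff, Fin.ext_iff, Fin.lt_def] at hne hi' hj' hij hij'
      omega
    · exact ⟨i', j', hij'.ne, fun _ => Iff.rfl, Or.inr hfar⟩
  have hdisj : Disjoint (window i a k ∪ window j a k) (window s b k : Finset (Fin m × Fin n)) :=
    disjoint_union_left.mpr ⟨disjoint_window (by tauto), disjoint_window (by tauto)⟩
  simp only [hagree]
  rw [prob_and_rowsAgree (dependsOn_rowsAgree.mono ?_) hrs hb, prob_rowsAgree hij.ne ha]
  · rw [two_mul, pow_add, div_div]
  · exact Set.subset_compl_iff_disjoint_right.mpr (by exact_mod_cast hdisj)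
end Grid

section Occurrences
variable {Ω ι : Type*} (Z : Finset ι) (E : ι → Ω → Prop) [∀ z, DecidablePred (E z)]

def numOccurring (ω : Ω) : ℝ := ∑ z ∈ Z, if E z ω then 1 else 0

lemma numOccurring_ne_zero_iff {ω : Ω} : numOccurring Z E ω ≠ 0 ↔ ∃ z ∈ Z, E z ω := by
  rw [numOccurring, ← natCast_card_filter, Nat.cast_ne_zero, ← pos_iff_ne_zero, card_pos,
    filter_nonempty_iff]

lemma mean_numOccurring [Fintype Ω] :
    (∑ ω, numOccurring Z E ω) / Fintype.card Ω = ∑ z ∈ Z, prob (E z) := by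
  simp_rw [numOccurring, prob_eq_sum_ite, ← sum_div]
  rw [sum_comm]

lemma second_moment_numOccurring [Fintype Ω] :
    (∑ ω, numOccurring Z E ω ^ 2) / Fintype.card Ω =
      ∑ z ∈ Z, ∑ w ∈ Z, prob (fun ω => E z ω ∧ E w ω) := by
  simp_rw [numOccurring, sq, sum_mul_sum, ite_zero_mul_ite_zero, mul_one, prob_eq_sum_ite,
    ← sum_div]
  rw [sum_comm]
  exact congrArg (· / _) (sum_congr rfl fun _ _ => sum_comm)
end Occurrences

section Aligned
variable {m n k : ℕ} {β : Type*}

/-- The comparisons `((i, j), a)`, `i < j`, of the `k`-mers of rows `i` and `j` at column `a`. -/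
def alignedTriples (m n k : ℕ) : Finset ((Fin m × Fin m) × ℕ) :=
  (univ.filter fun p : Fin m × Fin m => p.1 < p.2) ×ˢ range (n - k + 1)

def Overlapping (k : ℕ) (z w : (Fin m × Fin m) × ℕ) : Prop :=
  z.1 = w.1 ∧ z.2 < w.2 + k ∧ w.2 < z.2 + k

instance : DecidableRel (Overlapping (m := m) k) :=
  fun _ _ => inferInstanceAs (Decidable (_ ∧ _))

lemma mem_alignedTriples (hkn : k ≤ n) {z : (Fin m × Fin m) × ℕ} :
    z ∈ alignedTriples m n k ↔ z.1.1 < z.1.2 ∧ z.2 + k ≤ n := by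
  simp only [alignedTriples, mem_product, mem_filter, mem_univ, true_and, mem_range]
  omega

lemma card_alignedTriples : #(alignedTriples m n k) = m.choose 2 * (n - k + 1) := by
  rw [alignedTriples, card_product, Fintype.card_product_filter_lt, Fintype.card_fin, card_range]

lemma card_overlapping_le (z : (Fin m × Fin m) × ℕ) :
    #{w ∈ alignedTriples m n k | Overlapping k z w} ≤ 2 * k := calc
  _ ≤ #({z.1} ×ˢ Ico (z.2 + 1 - k) (z.2 + k)) := by
    refine card_le_card fun w hw => ?_
    obtain ⟨-, hrows, h1, h2⟩ := mem_filter.mp hw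
    rw [mem_product, mem_singleton, mem_Ico]
    exact ⟨hrows.symm, by omega, by omega⟩
  _ ≤ 2 * k := by
    rw [card_product, card_singleton, one_mul, Nat.card_Ico]
    omega

lemma kmer_eq_iff {x y : Fin n → Bool} {a : ℕ} (ha : a + k ≤ n) :
    kmer k x a = kmer k y a ↔ ∀ c : Fin n, a ≤ c.val → c.val < a + k → x c = y c := by
  simp only [funext_iff, kmer, _root_.get]
  refine ⟨fun h c h1 h2 => ?_, fun h t => ?_⟩
  · simpa [dif_pos c.2, Nat.add_sub_cancel' h1] using h ⟨c.val - a, by omega⟩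
  · rw [dif_pos (by omega), dif_pos (by omega)]
    exact h _ (Nat.le_add_right _ _) (by simp)

lemma exists_kmer_eq_iff (hkn : k ≤ n) (X : Fin m → Fin n → Bool) :
    (∃ i j : Fin m, i < j ∧ ∃ a : ℕ, a + k ≤ n ∧ kmer k (X i) a = kmer k (X j) a) ↔
      ∃ z ∈ alignedTriples m n k, RowsAgree k z.1.1 z.1.2 z.2 (uncurry X) := by
  simp only [mem_alignedTriples hkn, Prod.exists]
  constructor
  · rintro ⟨i, j, hij, a, ha, h⟩
    exact ⟨i, j, a, ⟨hij, ha⟩, (kmer_eq_iff ha).mp h⟩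
  · rintro ⟨i, j, a, ⟨hij, ha⟩, h⟩
    exact ⟨i, j, hij, a, ha, (kmer_eq_iff ha).mpr h⟩

variable [Fintype β] [Nonempty β]

lemma prob_rowsAgree_and_rowsAgree_le (hkn : k ≤ n) {z w : (Fin m × Fin m) × ℕ}
    (hz : z ∈ alignedTriples m n k) (hw : w ∈ alignedTriples m n k) :
    prob (fun f : Fin m × Fin n → β =>
        RowsAgree k z.1.1 z.1.2 z.2 f ∧ RowsAgree k w.1.1 w.1.2 w.2 f) ≤
      1 / Fintype.card β ^ (2 * k) +
        if Overlapping k z w then (1 : ℝ) / Fintype.card β ^ k else 0 := by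
  rw [mem_alignedTriples hkn] at hz hw
  by_cases hov : Overlapping k z w
  · rw [if_pos hov]
    calc _ ≤ prob (RowsAgree (n := n) (β := β) k z.1.1 z.1.2 z.2) := prob_mono fun _ h => h.1
      _ = 1 / Fintype.card β ^ k := prob_rowsAgree hz.1.ne hz.2
      _ ≤ _ := le_add_of_nonneg_left (by positivity)
  · rw [if_neg hov, add_zero]
    refine (prob_rowsAgree_and_rowsAgree hz.1 hw.1 hz.2 hw.2 ?_).le
    by_cases hzw : z.1 = w.1
    · simp only [Overlapping, hzw, true_and] at hov
      omega
    · exact Or.inl (by simpa using hzw)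

variable [DecidableEq β]

lemma mean_numOccurring_alignedTriples (hkn : k ≤ n) :
    (∑ f, numOccurring (alignedTriples m n k)
        (fun z (f : Fin m × Fin n → β) => RowsAgree k z.1.1 z.1.2 z.2 f) f) /
      Fintype.card (Fin m × Fin n → β) =
      (m.choose 2 : ℝ) * ((n - k + 1 : ℕ) : ℝ) / Fintype.card β ^ k := by
  rw [mean_numOccurring, sum_congr rfl fun z hz =>
    prob_rowsAgree ((mem_alignedTriples hkn).mp hz).1.ne ((mem_alignedTriples hkn).mp hz).2,
    sum_const, card_alignedTriples, nsmul_eq_mul]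
  push_cast
  ring

lemma second_moment_numOccurring_alignedTriples_le (hkn : k ≤ n) :
    (∑ f, numOccurring (alignedTriples m n k)
        (fun z (f : Fin m × Fin n → β) => RowsAgree k z.1.1 z.1.2 z.2 f) f ^ 2) /
      Fintype.card (Fin m × Fin n → β) ≤
      (#(alignedTriples m n k) : ℝ) ^ 2 / Fintype.card β ^ (2 * k) +
        2 * #(alignedTriples m n k) * k / Fintype.card β ^ k := by
  set Z := alignedTriples m n k
  set q : ℝ := (Fintype.card β : ℝ)
  calc _ = ∑ z ∈ Z, ∑ w ∈ Z, prob (fun f : Fin m × Fin n → β =>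
        RowsAgree k z.1.1 z.1.2 z.2 f ∧ RowsAgree k w.1.1 w.1.2 w.2 f) :=
        second_moment_numOccurring _ _
    _ ≤ ∑ z ∈ Z, ∑ w ∈ Z, (1 / q ^ (2 * k) + if Overlapping k z w then 1 / q ^ k else 0) :=
        sum_le_sum fun z hz => sum_le_sum fun w hw => prob_rowsAgree_and_rowsAgree_le hkn hz hw
    _ = ∑ z ∈ Z, (#Z / q ^ (2 * k) + #{w ∈ Z | Overlapping k z w} / q ^ k) := by
        simp only [sum_add_distrib, sum_const, nsmul_eq_mul, ← sum_filter, mul_one_div]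
    _ ≤ ∑ z ∈ Z, (#Z / q ^ (2 * k) + 2 * k / q ^ k) := by
        gcongr with z
        exact_mod_cast card_overlapping_le z
    _ = _ := by
        rw [sum_const, nsmul_eq_mul]
        ring
end Aligned

theorem aligned_repeat_prob_lower_bound_general
    (n m k : ℕ) (hk : 1 ≤ k) (hkn : k < n) :
    ((m.choose 2 : ℝ) * ((n - k + 1 : ℕ) : ℝ) / 2 ^ k) ^ 2 /
        ((m : ℝ) ^ 4 * (n : ℝ) ^ 2 / 2 ^ (2 * k) +
          2 * (m : ℝ) ^ 2 * (n : ℝ) * (k : ℝ) / 2 ^ k) ≤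
      prob (fun X : Fin m → Fin n → Bool =>
        ∃ i j : Fin m, i < j ∧ ∃ a : ℕ, a + k ≤ n ∧
          kmer k (X i) a = kmer k (X j) a) := by
  have hk_le : k ≤ n := hkn.le
  set V := numOccurring (alignedTriples m n k)
    fun z (f : Fin m × Fin n → Bool) => RowsAgree k z.1.1 z.1.2 z.2 f
  have hcard : (#(alignedTriples m n k) : ℝ) ≤ m ^ 2 * n := by
    rw [card_alignedTriples]
    exact_mod_cast Nat.mul_le_mul (Nat.choose_le_pow m 2) (by omega)
  have hsecond : (∑ f, V f ^ 2) / Fintype.card (Fin m × Fin n → Bool) ≤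
      (m : ℝ) ^ 4 * n ^ 2 / 2 ^ (2 * k) + 2 * m ^ 2 * n * k / 2 ^ k := by
    refine (second_moment_numOccurring_alignedTriples_le hk_le).trans ?_
    simp only [Fintype.card_bool, Nat.cast_ofNat]
    calc _ ≤ ((m : ℝ) ^ 2 * n) ^ 2 / 2 ^ (2 * k) + 2 * (m ^ 2 * n) * k / 2 ^ k := by gcongr
      _ = _ := by ring
  have hmean : (∑ f, V f) / Fintype.card (Fin m × Fin n → Bool) =
      (m.choose 2 : ℝ) * ((n - k + 1 : ℕ) : ℝ) / 2 ^ k := by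
    rw [mean_numOccurring_alignedTriples hk_le, Fintype.card_bool, Nat.cast_ofNat]
  rw [prob_congr (r := fun f => V f ≠ 0) (Equiv.curry _ _ _).symm fun X =>
      (exists_kmer_eq_iff hk_le X).trans (numOccurring_ne_zero_iff _ _).symm, ← hmean]
  exact sq_mean_div_le_prob_ne_zero V hsecond

/-- Paley–Zygmund lower bound: the probability that two distinct strings share a
`k`-mer at an aligned position is at least
`[(m choose 2)·(n-k+1)·2^{-k}]² / (m⁴·n²·2^{-2k} + 2·m²·n·k·2^{-k})`. -/
theorem aligned_repeat_prob_lower_bound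
    (n m k : ℕ) (hk : 1 ≤ k) (hkn : k < n) (hm : 2 ≤ m) :
    ((m.choose 2 : ℝ) * ((n - k + 1 : ℕ) : ℝ) / 2 ^ k) ^ 2 /
        ((m : ℝ) ^ 4 * (n : ℝ) ^ 2 / 2 ^ (2 * k) +
          2 * (m : ℝ) ^ 2 * (n : ℝ) * (k : ℝ) / 2 ^ k) ≤
      prob (fun X : Fin m → Fin n → Bool =>
        ∃ i j : Fin m, i < j ∧ ∃ a : ℕ, a + k ≤ n ∧
          kmer k (X i) a = kmer k (X j) a) :=
  aligned_repeat_prob_lower_bound_general n m k hk hkn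
end

section
/- Fix integers n, m, k with 1 ≤ k < n and m ≥ 2, and set n' = n − k + 1. Let U be the number of tuples (i, j, a₁, a₂, a₃) with 1 ≤ i < j ≤ m, positions a₁ < a₂ and a₃ in {1,…,n'} with a₃ + a₂ − a₁ ≤ n', such that x_i(a₁) = x_j(a₃) and x_i(a₂) = x_j(a₃ + a₂ − a₁). Then E[U] ≥ (m choose 2)·⌊n'/4⌋³·2^{−2k}. -/
/-- `U`: the number of tuples `(i, j, a₁, a₂, a₃)` with `i < j`, 0-indexed valid
positions `a₁ < a₂` and `a₃` (with `a₃ + (a₂ - a₁)` also a valid position), such that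
`x_i(a₁) = x_j(a₃)` and `x_i(a₂) = x_j(a₃ + a₂ - a₁)`. -/
noncomputable def Ucount (n m k : ℕ) (X : Fin m → Fin n → Bool) : ℕ :=
  Nat.card {q : Fin m × Fin m × ℕ × ℕ × ℕ //
    q.1 < q.2.1 ∧
    q.2.2.1 < q.2.2.2.1 ∧
    q.2.2.1 + k ≤ n ∧ q.2.2.2.1 + k ≤ n ∧ q.2.2.2.2 + k ≤ n ∧
    q.2.2.2.2 + (q.2.2.2.1 - q.2.2.1) + k ≤ n ∧
    kmer k (X q.1) q.2.2.1 = kmer k (X q.2.1) q.2.2.2.2 ∧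
    kmer k (X q.1) q.2.2.2.1 = kmer k (X q.2.1) (q.2.2.2.2 + (q.2.2.2.1 - q.2.2.1))}

/-- Expectation of a real-valued function under the uniform distribution on a
finite sample space. -/
noncomputable def expect {Ω : Type*} [Fintype Ω] (f : Ω → ℝ) : ℝ :=
  (∑ ω, f ω) / (Fintype.card Ω : ℝ)

/-! ### Auxiliary lemmas -/

lemma get_pos {n : ℕ} (x : Fin n → Bool) {u : ℕ} (h : u < n) : get x u = x ⟨u, h⟩ := dif_pos h

lemma get_fin {n : ℕ} (x : Fin n → Bool) (t : Fin n) : get x t.val = x t := by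
  rw [get_pos x t.isLt]

lemma card_filter_val_Ico (n a b : ℕ) (hb : b ≤ n) :
    (Finset.univ.filter (fun x : Fin n => a ≤ x.val ∧ x.val < b)).card = b - a := by
  rw [Finset.card_filter, Fin.sum_univ_eq_sum_range (fun t => if a ≤ t ∧ t < b then 1 else 0)]
  rw [← Finset.card_filter]
  have : (Finset.range n).filter (fun t => a ≤ t ∧ t < b) = Finset.Ico a b := by
    ext x; simp [Finset.mem_Ico]; omega
  rw [this, Nat.card_Ico]

lemma card_filter_val_lt (n q : ℕ) (hq : q ≤ n) :
    (Finset.univ.filter (fun x : Fin n => x.val < q)).card = q := by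
  have := card_filter_val_Ico n 0 q hq
  simpa using this

lemma card_lt_pairs (m : ℕ) :
    (Finset.univ.filter (fun p : Fin m × Fin m => p.1 < p.2)).card = m.choose 2 := by
  rw [Finset.card_filter, Fintype.sum_prod_type, Finset.sum_comm]
  have h1 : ∀ j : Fin m, (∑ i : Fin m, if i < j then (1:ℕ) else 0) = j.val := by
    intro j
    rw [← Finset.card_filter]
    have : (Finset.univ.filter (fun i : Fin m => i < j))
        = (Finset.univ.filter (fun i : Fin m => i.val < j.val)) := by
      apply Finset.filter_congr; intro x _; exact Iff.rfl
    rw [this, card_filter_val_lt m j.val (le_of_lt j.isLt)]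
  simp_rw [h1]
  rw [Fin.sum_univ_eq_sum_range (fun t => t)]
  have h2 := Finset.sum_range_id_mul_two m
  rw [Nat.choose_two_right]
  omega

/-! ### The compression map and the per-tuple counting bound -/

def phi {n m : ℕ} (i j : Fin m) (a1 a3 d k : ℕ) (X : Fin m → Fin n → Bool) :
    Fin m → Fin n → Bool :=
  fun i' t =>
    if i' = j ∧ a3 ≤ t.val ∧ (t.val - a3 < k ∨ (d ≤ t.val - a3 ∧ t.val - a3 < d + k))
    then get (X i) (a1 + (t.val - a3)) else X i' t

lemma phi_ne {n m : ℕ} {i j i' : Fin m} (a1 a3 d k : ℕ) (X : Fin m → Fin n → Bool)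
    (h : i' ≠ j) : phi i j a1 a3 d k X i' = X i' := by
  funext t; simp [phi, h]

lemma phi_pos {n m : ℕ} (i j : Fin m) (a1 a3 d k : ℕ) (X : Fin m → Fin n → Bool)
    (t : Fin n) (s : ℕ) (ht : t.val = a3 + s) (hs : s < k ∨ (d ≤ s ∧ s < d + k)) :
    phi i j a1 a3 d k X j t = get (X i) (a1 + s) := by
  have h2 : t.val - a3 = s := by omega
  simp only [phi, h2]
  rw [if_pos ⟨trivial, by omega, hs⟩]

lemma phi_neg {n m : ℕ} (i j : Fin m) (a1 a3 d k : ℕ) (X : Fin m → Fin n → Bool)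
    (i' : Fin m) (t : Fin n)
    (h : ¬(i' = j ∧ a3 ≤ t.val ∧ (t.val - a3 < k ∨ (d ≤ t.val - a3 ∧ t.val - a3 < d + k)))) :
    phi i j a1 a3 d k X i' t = X i' t := by
  simp only [phi]
  rw [if_neg h]

lemma core_count (n m k : ℕ) (i j : Fin m) (hij : i ≠ j) (a1 a2 a3 : ℕ)
    (h12 : a1 ≤ a2) (h2 : a2 + k ≤ n) (h3 : a3 + k ≤ n)
    (h4 : a3 + (a2 - a1) + k ≤ n) :
    2 ^ (n * m) ≤ 2 ^ (2 * k) *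
      (Finset.univ.filter (fun X : Fin m → Fin n → Bool =>
        kmer k (X i) a1 = kmer k (X j) a3 ∧
        kmer k (X i) a2 = kmer k (X j) (a3 + (a2 - a1)))).card := by
  set d := a2 - a1 with hd0
  have hd : a1 + d = a2 := by omega
  have hmem : ∀ X : Fin m → Fin n → Bool,
      kmer k (phi i j a1 a3 d k X i) a1 = kmer k (phi i j a1 a3 d k X j) a3 ∧
      kmer k (phi i j a1 a3 d k X i) a2 = kmer k (phi i j a1 a3 d k X j) (a3 + d) := by
    intro X
    have hrow : phi i j a1 a3 d k X i = X i := phi_ne a1 a3 d k X hij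
    constructor
    · funext u
      show get (phi i j a1 a3 d k X i) (a1 + u.val) = get (phi i j a1 a3 d k X j) (a3 + u.val)
      rw [hrow]
      have h1 : a3 + u.val < n := by omega
      rw [get_pos _ h1]
      rw [phi_pos i j a1 a3 d k X ⟨a3 + u.val, h1⟩ u.val rfl (Or.inl u.isLt)]
    · funext u
      show get (phi i j a1 a3 d k X i) (a2 + u.val)
          = get (phi i j a1 a3 d k X j) ((a3 + d) + u.val)
      rw [hrow]
      have h1 : (a3 + d) + u.val < n := by omega
      rw [get_pos _ h1]
      rw [phi_pos i j a1 a3 d k X ⟨(a3 + d) + u.val, h1⟩ (d + u.val) (by simp; omega)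
        (Or.inr ⟨by omega, by omega⟩)]
      have : a2 + u.val = a1 + (d + u.val) := by omega
      rw [this]
  have hinj : ∀ X X' : Fin m → Fin n → Bool,
      phi i j a1 a3 d k X = phi i j a1 a3 d k X' →
      kmer k (X j) a3 = kmer k (X' j) a3 →
      kmer k (X j) (a3 + d) = kmer k (X' j) (a3 + d) → X = X' := by
    intro X X' hp h1 h2'
    funext i' t
    by_cases hc : i' = j ∧ a3 ≤ t.val ∧
        (t.val - a3 < k ∨ (d ≤ t.val - a3 ∧ t.val - a3 < d + k))
    · obtain ⟨hi, hle, hor⟩ := hc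
      subst hi
      rcases hor with hs | ⟨hs1, hs2⟩
      · have hu : get (X i') (a3 + (t.val - a3)) = get (X' i') (a3 + (t.val - a3)) :=
          congrFun h1 ⟨t.val - a3, hs⟩
        have he : a3 + (t.val - a3) = t.val := by omega
        rw [he, get_fin, get_fin] at hu
        exact hu
      · have hu : get (X i') ((a3 + d) + (t.val - a3 - d)) =
            get (X' i') ((a3 + d) + (t.val - a3 - d)) :=
          congrFun h2' ⟨t.val - a3 - d, by omega⟩
        have he : (a3 + d) + (t.val - a3 - d) = t.val := by omega
        rw [he, get_fin, get_fin] at hu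
        exact hu
    · have e1 := phi_neg i j a1 a3 d k X i' t hc
      have e2 := phi_neg i j a1 a3 d k X' i' t hc
      rw [← e1, ← e2, hp]
  have hcardfun : Fintype.card ((Fin k → Bool) × (Fin k → Bool)) = 2 ^ (2 * k) := by
    simp [two_mul, pow_add]
  have fiber : ∀ b ∈ Finset.univ.image (phi i j a1 a3 d k (n := n)),
      (Finset.univ.filter fun X : Fin m → Fin n → Bool => phi i j a1 a3 d k X = b).card
        ≤ 2 ^ (2 * k) := by
    intro b _
    rw [← hcardfun, ← Finset.card_univ]
    apply Finset.card_le_card_of_injOn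
      (fun X => (kmer k (X j) a3, kmer k (X j) (a3 + d)))
      (fun _ _ => Finset.mem_univ _)
    intro X hX X' hX' hF
    simp only [Finset.coe_filter, Set.mem_setOf_eq, Finset.mem_univ, true_and] at hX hX'
    simp only [Prod.mk.injEq] at hF
    exact hinj X X' (by rw [hX, hX']) hF.1 hF.2
  calc 2 ^ (n * m) = Fintype.card (Fin m → Fin n → Bool) := by
        simp [pow_mul]
    _ = (Finset.univ : Finset (Fin m → Fin n → Bool)).card := Finset.card_univ.symm
    _ ≤ 2 ^ (2 * k) * (Finset.univ.image (phi i j a1 a3 d k)).card :=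
        Finset.card_le_mul_card_image _ _ fiber
    _ ≤ _ := by
        apply Nat.mul_le_mul_left
        apply Finset.card_le_card
        intro b hb
        obtain ⟨X, _, rfl⟩ := Finset.mem_image.mp hb
        exact Finset.mem_filter.mpr ⟨Finset.mem_univ _, hmem X⟩

/-! ### Rewriting `Ucount` as a finite count -/

abbrev PredT (n m k : ℕ) (X : Fin m → Fin n → Bool)
    (t : Fin m × Fin m × Fin n × Fin n × Fin n) : Prop :=
  t.1 < t.2.1 ∧ t.2.2.1.val < t.2.2.2.1.val ∧ t.2.2.1.val + k ≤ n ∧ t.2.2.2.1.val + k ≤ n ∧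
  t.2.2.2.2.val + k ≤ n ∧ t.2.2.2.2.val + (t.2.2.2.1.val - t.2.2.1.val) + k ≤ n ∧
  kmer k (X t.1) t.2.2.1.val = kmer k (X t.2.1) t.2.2.2.2.val ∧
  kmer k (X t.1) t.2.2.2.1.val = kmer k (X t.2.1) (t.2.2.2.2.val + (t.2.2.2.1.val - t.2.2.1.val))

lemma Ucount_eq (n m k : ℕ) (hk : 1 ≤ k) (X : Fin m → Fin n → Bool) :
    Ucount n m k X = (Finset.univ.filter (PredT n m k X)).card := by
  rw [Ucount, ← Fintype.card_subtype, ← Nat.card_eq_fintype_card]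
  refine (Nat.card_eq_of_bijective
    (fun t : {t : Fin m × Fin m × Fin n × Fin n × Fin n // PredT n m k X t} =>
      (⟨(t.1.1, t.1.2.1, t.1.2.2.1.val, t.1.2.2.2.1.val, t.1.2.2.2.2.val), t.2⟩ :
        {q : Fin m × Fin m × ℕ × ℕ × ℕ //
          q.1 < q.2.1 ∧
          q.2.2.1 < q.2.2.2.1 ∧
          q.2.2.1 + k ≤ n ∧ q.2.2.2.1 + k ≤ n ∧ q.2.2.2.2 + k ≤ n ∧
          q.2.2.2.2 + (q.2.2.2.1 - q.2.2.1) + k ≤ n ∧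
          kmer k (X q.1) q.2.2.1 = kmer k (X q.2.1) q.2.2.2.2 ∧
          kmer k (X q.1) q.2.2.2.1 = kmer k (X q.2.1) (q.2.2.2.2 + (q.2.2.2.1 - q.2.2.1))}))
    ⟨?_, ?_⟩).symm
  · rintro ⟨⟨i, j, a1, a2, a3⟩, h⟩ ⟨⟨i', j', a1', a2', a3'⟩, h'⟩ heq
    simp only [Subtype.mk.injEq, Prod.mk.injEq] at heq
    obtain ⟨e1, e2, e3, e4, e5⟩ := heq
    apply Subtype.ext
    simp only [Prod.mk.injEq]
    exact ⟨e1, e2, Fin.ext e3, Fin.ext e4, Fin.ext e5⟩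
  · rintro ⟨⟨i, j, a1, a2, a3⟩, h⟩
    dsimp only at h
    obtain ⟨h1, h2, h3, h4, h5, h6, h7, h8⟩ := h
    exact ⟨⟨(i, j, ⟨a1, by omega⟩, ⟨a2, by omega⟩, ⟨a3, by omega⟩),
      ⟨h1, h2, h3, h4, h5, h6, h7, h8⟩⟩, rfl⟩

/-- With `n' = n - k + 1`, we have `E[U] ≥ (m choose 2) · ⌊n'/4⌋³ · 2^{-2k}`. -/
theorem Ucount_expectation_lower_bound
    (n m k : ℕ) (hk : 1 ≤ k) (hkn : k < n) (hm : 2 ≤ m) :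
    (m.choose 2 : ℝ) * (((n - k + 1) / 4 : ℕ) : ℝ) ^ 3 / 2 ^ (2 * k) ≤
      expect (fun X : Fin m → Fin n → Bool => (Ucount n m k X : ℝ)) := by
  set q := (n - k + 1) / 4 with hq
  have hq4 : 4 * q ≤ n - k + 1 := by
    have := Nat.div_mul_le_self (n - k + 1) 4
    omega
  have hqn : q ≤ n := by omega
  have h3qn : 3 * q ≤ n := by omega
  set G : Finset (Fin m × Fin m × Fin n × Fin n × Fin n) :=
    Finset.univ.filter (fun t =>
      ((t.1 < t.2.1 ∧ t.2.2.1.val < q) ∧ (2*q ≤ t.2.2.2.1.val ∧ t.2.2.2.1.val < 3*q)) ∧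
        t.2.2.2.2.val < q) with hG
  -- cardinality of the good set
  have card_G : G.card = m.choose 2 * q ^ 3 := by
    have hbij : G.card = ((Finset.univ.filter (fun p : Fin m × Fin m => p.1 < p.2)) ×ˢ
        ((Finset.univ.filter (fun a : Fin n => a.val < q)) ×ˢ
          ((Finset.univ.filter (fun a : Fin n => 2*q ≤ a.val ∧ a.val < 3*q)) ×ˢ
            (Finset.univ.filter (fun a : Fin n => a.val < q))))).card := by
      refine Finset.card_bij' (fun t _ => ((t.1, t.2.1), t.2.2))
        (fun p _ => (p.1.1, p.1.2, p.2)) ?_ ?_ ?_ ?_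
      case refine_1 =>
        intro a ha
        rw [hG, Finset.mem_filter] at ha
        simp only [Finset.mem_product, Finset.mem_filter, Finset.mem_univ, true_and]
        tauto
      case refine_2 =>
        intro p hp
        simp only [Finset.mem_product, Finset.mem_filter, Finset.mem_univ, true_and] at hp
        rw [hG, Finset.mem_filter]
        refine ⟨Finset.mem_univ _, ?_⟩
        tauto
      case refine_3 => intro a _; rfl
      case refine_4 => intro p _; rfl
    rw [hbij, Finset.card_product, Finset.card_product, Finset.card_product]
    rw [card_lt_pairs, card_filter_val_lt n q hqn,
      card_filter_val_Ico n (2*q) (3*q) h3qn]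
    have : 3*q - 2*q = q := by omega
    rw [this]
    ring
  -- exchanging the order of summation
  have sum_eq : (∑ X : Fin m → Fin n → Bool, Ucount n m k X)
      = ∑ t : Fin m × Fin m × Fin n × Fin n × Fin n,
          (Finset.univ.filter (fun X : Fin m → Fin n → Bool => PredT n m k X t)).card := by
    simp_rw [Ucount_eq n m k hk, Finset.card_filter]
    exact Finset.sum_comm
  -- the per-tuple bound on good tuples
  have per_tuple : ∀ t ∈ G, 2 ^ (n*m) ≤ 2 ^ (2*k) *
      (Finset.univ.filter (fun X : Fin m → Fin n → Bool => PredT n m k X t)).card := by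
    intro t ht
    rw [hG, Finset.mem_filter] at ht
    obtain ⟨-, ⟨⟨hij, ha1⟩, ha2l, ha2u⟩, ha3⟩ := ht
    have hfe : (Finset.univ.filter (fun X : Fin m → Fin n → Bool => PredT n m k X t))
        = Finset.univ.filter (fun X : Fin m → Fin n → Bool =>
            kmer k (X t.1) t.2.2.1.val = kmer k (X t.2.1) t.2.2.2.2.val ∧
            kmer k (X t.1) t.2.2.2.1.val
              = kmer k (X t.2.1) (t.2.2.2.2.val + (t.2.2.2.1.val - t.2.2.1.val))) := by
      apply Finset.filter_congr
      intro X _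
      constructor
      · rintro ⟨_, _, _, _, _, _, h7, h8⟩; exact ⟨h7, h8⟩
      · rintro ⟨h7, h8⟩
        exact ⟨hij, by omega, by omega, by omega, by omega, by omega, h7, h8⟩
    rw [hfe]
    exact core_count n m k t.1 t.2.1 (ne_of_lt hij) t.2.2.1.val t.2.2.2.1.val t.2.2.2.2.val
      (by omega) (by omega) (by omega) (by omega)
  -- the main counting inequality
  have main_nat : m.choose 2 * q ^ 3 * 2 ^ (n * m)
      ≤ (∑ X : Fin m → Fin n → Bool, Ucount n m k X) * 2 ^ (2 * k) := by
    calc m.choose 2 * q ^ 3 * 2 ^ (n * m) = ∑ _t ∈ G, 2 ^ (n * m) := by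
          rw [Finset.sum_const, smul_eq_mul, card_G]
      _ ≤ ∑ t ∈ G, 2 ^ (2*k) *
            (Finset.univ.filter (fun X : Fin m → Fin n → Bool => PredT n m k X t)).card :=
          Finset.sum_le_sum per_tuple
      _ = 2 ^ (2*k) * ∑ t ∈ G,
            (Finset.univ.filter (fun X : Fin m → Fin n → Bool => PredT n m k X t)).card := by
          rw [Finset.mul_sum]
      _ ≤ 2 ^ (2*k) * ∑ t : Fin m × Fin m × Fin n × Fin n × Fin n,
            (Finset.univ.filter (fun X : Fin m → Fin n → Bool => PredT n m k X t)).card := by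
          apply Nat.mul_le_mul_left
          exact Finset.sum_le_sum_of_subset (Finset.filter_subset _ _)
      _ = 2 ^ (2*k) * ∑ X : Fin m → Fin n → Bool, Ucount n m k X := by rw [← sum_eq]
      _ = _ := mul_comm _ _
  -- conclusion
  have hcardN : Fintype.card (Fin m → Fin n → Bool) = 2 ^ (n * m) := by
    simp [pow_mul]
  simp only [expect]
  rw [hcardN]
  rw [div_le_div_iff₀ (by positivity) (by positivity)]
  push_cast
  exact_mod_cast main_nat
end
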